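/- arXiv:2109.02608 — 3 statements merged into one kernel-verified Lean document; each statement's English description precedes it below -/
import Mathlib

section
/- Define E(α,β) = Σ_{a∈{0,1}} [P(a,a|α,β) − P(a,ā|α,β)] where P(a,s|α,β) = (1/2)|⟨φ_{α1}^a|φ_{β0}^{s̄}⟩|² with the states |φ_{αα'}^a⟩ as in the paper. Then the CHSH quantity I = E(0,0) + E(0,1) − E(1,0) + E(1,1) equals −2√2, hence |I| > 2, saturating the Tsirelson bound 2√2. -/
open scoped InnerProductSpace
open Real

noncomputable section

abbrev Qubit := EuclideanSpace ℂ (Fin 2)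

def e (a : Fin 2) : Qubit := EuclideanSpace.single a 1

def tens (u v : Qubit) : EuclideanSpace ℂ (Fin 2 × Fin 2) :=
  (WithLp.equiv 2 _).symm (fun p => u p.1 * v p.2)

def singlet : EuclideanSpace ℂ (Fin 2 × Fin 2) :=
  ((1 / Real.sqrt 2 : ℝ) : ℂ) • (tens (e 0) (e 1) - tens (e 1) (e 0))

def phi (α α' a : Fin 2) : Qubit :=
  if α' = 0 then
    (if α = 0 then e a
     else ((1 / Real.sqrt 2 : ℝ) : ℂ) • (e 0 + ((-1 : ℂ) ^ (a : ℕ)) • e 1))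
  else
    (if α = 0 then
      ((Real.cos (π / 8) : ℝ) : ℂ) • e a
        + ((-1 : ℂ) ^ (a : ℕ) * ((Real.sin (π / 8) : ℝ) : ℂ)) • e (1 - a)
     else
      ((Real.sin (π / 8) : ℝ) : ℂ) • e a
        + ((-1 : ℂ) ^ (a : ℕ) * ((Real.cos (π / 8) : ℝ) : ℂ)) • e (1 - a))

def Pdist (a s α β : Fin 2) : ℝ := (1 / 2) * ‖⟪phi α 1 a, phi β 0 (1 - s)⟫_ℂ‖ ^ 2

def Ecorr (α β : Fin 2) : ℝ := ∑ a : Fin 2, (Pdist a a α β - Pdist a (1 - a) α β)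


/-! Every state involved is, up to sign, a real unit vector `cos θ |0⟩ + sin θ |1⟩`, and flipping
the outcome bit turns its angle by `π / 2`. Hence `P(a,s|α,β)` is `cos² / 2` of an angle
difference, and `E(α,β) = sin² x - cos² x = -cos 2x` with `x = θ_α - ψ_β`, where `θ_α = π/8 + α π/4`
and `ψ_β = β π/4` are the CHSH-optimal angles. The four values of `2x` are `π/4, -π/4, 3π/4, π/4`. -/

def realQubit (θ : ℝ) : Qubit := (cos θ : ℂ) • e 0 + (sin θ : ℂ) • e 1

lemma inner_realQubit (θ ψ : ℝ) : ⟪realQubit θ, realQubit ψ⟫_ℂ = (cos (θ - ψ) : ℂ) := by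
  simp [realQubit, e, EuclideanSpace.inner_single_left, cos_sub, -Complex.ofReal_cos,
    -Complex.ofReal_sin]
  ring

def aliceAngle (α : Fin 2) : ℝ := π / 8 + α * (π / 4)

def bobAngle (β : Fin 2) : ℝ := β * (π / 4)

lemma phi_alice_eq_realQubit (α a : Fin 2) :
    phi α 1 a = realQubit (aliceAngle α + a * (π / 2)) := by
  have h38 : π / 8 + π / 4 = π / 2 - π / 8 := by ring
  have h78 : π / 2 - π / 8 + π / 2 = π - π / 8 := by ring
  ext i
  fin_cases α <;> fin_cases a <;> fin_cases i <;>
    simp [phi, aliceAngle, realQubit, e, h38, h78, cos_add_pi_div_two, sin_add_pi_div_two,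
      cos_pi_div_two_sub, sin_pi_div_two_sub, -Complex.ofReal_cos, -Complex.ofReal_sin,
      -cos_pi_div_eight, -sin_pi_div_eight]

lemma phi_bob_eq_smul_realQubit (β s : Fin 2) :
    phi β 0 s = ((-1) ^ ((β * s : Fin 2) : ℕ) : ℂ) • realQubit (bobAngle β + s * (π / 2)) := by
  have h34 : π / 4 + π / 2 = π - π / 4 := by ring
  have hcos : cos (π / 4) = (√2)⁻¹ := by rw [cos_pi_div_four]; field_simp; simp
  have hsin : sin (π / 4) = (√2)⁻¹ := by rw [sin_pi_div_four]; field_simp; simp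
  ext i
  fin_cases β <;> fin_cases s <;> fin_cases i <;>
    simp [phi, bobAngle, realQubit, e, h34, hcos, hsin, -Complex.ofReal_cos, -Complex.ofReal_sin,
      -cos_pi_div_four, -sin_pi_div_four]

lemma Pdist_eq (a s α β : Fin 2) :
    Pdist a s α β =
      cos (aliceAngle α + a * (π / 2) - (bobAngle β + (1 - s : Fin 2) * (π / 2))) ^ 2 / 2 := by
  rw [Pdist, phi_alice_eq_realQubit, phi_bob_eq_smul_realQubit, inner_smul_right, inner_realQubit,
    norm_mul, norm_pow, norm_neg, norm_one, one_pow, one_mul, Complex.norm_real, Real.norm_eq_abs,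
    sq_abs]
  ring

lemma Ecorr_eq (α β : Fin 2) : Ecorr α β = -cos (2 * (aliceAngle α - bobAngle β)) := by
  set x := aliceAngle α - bobAngle β
  have h₀ : aliceAngle α - (bobAngle β + π / 2) = x - π / 2 := by ring
  have h₁ : aliceAngle α + π / 2 - bobAngle β = x + π / 2 := by ring
  simp [Ecorr, Fin.sum_univ_two, Pdist_eq, h₀, h₁, cos_sub_pi_div_two, cos_add_pi_div_two,
    cos_two_mul, sin_sq]
  ring

theorem chsh_value_singlet :
    Ecorr 0 0 + Ecorr 0 1 - Ecorr 1 0 + Ecorr 1 1 = -(2 * Real.sqrt 2) ∧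
    2 < |Ecorr 0 0 + Ecorr 0 1 - Ecorr 1 0 + Ecorr 1 1| := by
  have h₀₀ : 2 * (aliceAngle 0 - bobAngle 0) = π / 4 := by simp [aliceAngle, bobAngle]; ring
  have h₀₁ : 2 * (aliceAngle 0 - bobAngle 1) = -(π / 4) := by simp [aliceAngle, bobAngle]; ring
  have h₁₀ : 2 * (aliceAngle 1 - bobAngle 0) = π - π / 4 := by simp [aliceAngle, bobAngle]; ring
  have h₁₁ : 2 * (aliceAngle 1 - bobAngle 1) = π / 4 := by simp [aliceAngle, bobAngle]; ring
  have hI : Ecorr 0 0 + Ecorr 0 1 - Ecorr 1 0 + Ecorr 1 1 = -(2 * √2) := by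
    rw [Ecorr_eq, Ecorr_eq, Ecorr_eq, Ecorr_eq, h₀₀, h₀₁, h₁₀, h₁₁, cos_neg, cos_pi_sub,
      cos_pi_div_four]
    ring
  refine ⟨hI, ?_⟩
  rw [hI, abs_neg, abs_of_pos (by positivity)]
  linarith [one_lt_sqrt_two]
end
end

section
/- Any local hidden variable (factorizable) probability distribution satisfies the CHSH inequality: if P(a,b|α,β) = Σ_λ p(λ) P_A(a|α,λ) P_B(b|β,λ) with p a probability distribution over a finite set Λ and P_A(·|α,λ), P_B(·|β,λ) probability distributions on {0,1} for each input and λ, then with E(α,β) = Σ_{a,b} (−1)^{a⊕b} P(a,b|α,β), we have |E(0,0) + E(0,1) − E(1,0) + E(1,1)| ≤ 2. -/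
open scoped InnerProductSpace
open Real

noncomputable section

theorem lhv_chsh (Λ : Type) [Fintype Λ] (p : Λ → ℝ)
    (hp : ∀ l, 0 ≤ p l) (hp1 : ∑ l, p l = 1)
    (PA PB : Fin 2 → Fin 2 → Λ → ℝ)
    (hPA : ∀ a α l, 0 ≤ PA a α l) (hPA1 : ∀ α l, ∑ a, PA a α l = 1)
    (hPB : ∀ b β l, 0 ≤ PB b β l) (hPB1 : ∀ β l, ∑ b, PB b β l = 1) :
    let P : Fin 2 → Fin 2 → Fin 2 → Fin 2 → ℝ :=
      fun a b α β => ∑ l, p l * PA a α l * PB b β l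
    let E : Fin 2 → Fin 2 → ℝ :=
      fun α β => ∑ a : Fin 2, ∑ b : Fin 2, (-1 : ℝ) ^ ((a : ℕ) + (b : ℕ)) * P a b α β
    |E 0 0 + E 0 1 - E 1 0 + E 1 1| ≤ 2 := by
  intro P E
  set A : Fin 2 → Λ → ℝ := fun α l => PA 0 α l - PA 1 α l with hA
  set B : Fin 2 → Λ → ℝ := fun β l => PB 0 β l - PB 1 β l with hB
  have hAbd : ∀ α l, |A α l| ≤ 1 := by
    intro α l
    have h1 := hPA1 α l
    simp [Fin.sum_univ_two] at h1
    rw [abs_le]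
    constructor <;> simp only [hA] <;> nlinarith [hPA 0 α l, hPA 1 α l]
  have hBbd : ∀ β l, |B β l| ≤ 1 := by
    intro β l
    have h1 := hPB1 β l
    simp [Fin.sum_univ_two] at h1
    rw [abs_le]
    constructor <;> simp only [hB] <;> nlinarith [hPB 0 β l, hPB 1 β l]
  have hE : ∀ α β, E α β = ∑ l, p l * (A α l * B β l) := by
    intro α β
    simp only [E, P, Fin.sum_univ_two, Fin.val_zero, Fin.val_one, Finset.mul_sum]
    rw [← Finset.sum_add_distrib, ← Finset.sum_add_distrib, ← Finset.sum_add_distrib]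
    apply Finset.sum_congr rfl
    intro l _
    simp only [hA, hB]
    ring
  have key : E 0 0 + E 0 1 - E 1 0 + E 1 1
      = ∑ l, p l * (A 0 l * (B 0 l + B 1 l) + A 1 l * (B 1 l - B 0 l)) := by
    simp only [hE]
    rw [← Finset.sum_add_distrib, ← Finset.sum_sub_distrib, ← Finset.sum_add_distrib]
    apply Finset.sum_congr rfl
    intro l _
    ring
  rw [key]
  calc |∑ l, p l * (A 0 l * (B 0 l + B 1 l) + A 1 l * (B 1 l - B 0 l))|
      ≤ ∑ l, |p l * (A 0 l * (B 0 l + B 1 l) + A 1 l * (B 1 l - B 0 l))| :=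
        Finset.abs_sum_le_sum_abs _ _
    _ ≤ ∑ l, p l * 2 := by
        apply Finset.sum_le_sum
        intro l _
        rw [abs_mul, abs_of_nonneg (hp l)]
        apply mul_le_mul_of_nonneg_left _ (hp l)
        have hb0 := abs_le.mp (hBbd 0 l)
        have hb1 := abs_le.mp (hBbd 1 l)
        have step1 : |A 0 l * (B 0 l + B 1 l) + A 1 l * (B 1 l - B 0 l)|
            ≤ |B 0 l + B 1 l| + |B 1 l - B 0 l| := by
          refine (abs_add_le _ _).trans ?_
          rw [abs_mul, abs_mul]
          have g1 : |A 0 l| * |B 0 l + B 1 l| ≤ 1 * |B 0 l + B 1 l| :=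
            mul_le_mul_of_nonneg_right (hAbd 0 l) (abs_nonneg _)
          have g2 : |A 1 l| * |B 1 l - B 0 l| ≤ 1 * |B 1 l - B 0 l| :=
            mul_le_mul_of_nonneg_right (hAbd 1 l) (abs_nonneg _)
          linarith
        have step2 : |B 0 l + B 1 l| + |B 1 l - B 0 l| ≤ 2 := by
          rcases abs_cases (B 0 l + B 1 l) with ⟨h1, _⟩ | ⟨h1, _⟩ <;>
          rcases abs_cases (B 1 l - B 0 l) with ⟨h2, _⟩ | ⟨h2, _⟩ <;>
          rw [h1, h2] <;> linarith [hb0.1, hb0.2, hb1.1, hb1.2]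
        linarith
    _ = 2 := by rw [← Finset.sum_mul, hp1, one_mul]
end
end

section
/- Tsirelson's bound: for any density operator ρ on H_A ⊗ H_B and Hermitian operators A₀, A₁ on H_A and B₀, B₁ on H_B with operator norms ≤ 1 (i.e. −1 ≤ Aᵢ ≤ 1, −1 ≤ Bⱼ ≤ 1), the quantity |Tr[ρ(A₀⊗B₀ + A₀⊗B₁ − A₁⊗B₀ + A₁⊗B₁)]| is at most 2√2. -/
open scoped Kronecker ComplexOrder
open Matrix

/-!
If the `aᵢ` commute with the `bⱼ` and all four are self-adjoint with square at
most `1`, then `2√2 - (a₀b₀ + a₀b₁ - a₁b₀ + a₁b₁)` is `(√2)⁻¹` times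
`(a₀ - (b₀ + b₁)/√2)² + (a₁ - (b₁ - b₀)/√2)² + Σ (1 - x²)`, a sum of nonnegative elements in
any star-ordered real algebra. Here `-1 ≤ x ≤ 1` gives `x² ≤ 1` because
`2(1 - x²) = (1 - x)(1 + x)(1 - x) + (1 + x)(1 - x)(1 + x)`. In the matrix order `Aᵢ ⊗ 1` and
`1 ⊗ Bⱼ` are such commuting contractions, so `-2√2 ≤ S ≤ 2√2`, and a density matrix `ρ` turns
this into `|Tr(ρS)| ≤ 2√2`.
-/

def chshOperator {R : Type*} [Ring R] (a b : Fin 2 → R) : R :=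
  a 0 * b 0 + a 0 * b 1 - a 1 * b 0 + a 1 * b 1

theorem chshOperator_neg_left {R : Type*} [Ring R] (a b : Fin 2 → R) :
    chshOperator (-a) b = -chshOperator a b := by
  simp only [chshOperator, Pi.neg_apply, neg_mul]
  abel

section StarOrderedRing

variable {R : Type*} [Ring R] [PartialOrder R] [StarRing R] [StarOrderedRing R]

theorem IsSelfAdjoint.of_le_one {a : R} (h : a ≤ 1) : IsSelfAdjoint a := by
  simpa using (IsSelfAdjoint.one R).sub (.of_nonneg (sub_nonneg.2 h))

variable [Algebra ℝ R] [StarModule ℝ R]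

theorem mul_self_le_one_of_mem_Icc {a : R} (h : a ∈ Set.Icc (-1) 1) : a * a ≤ 1 := by
  have ha : IsSelfAdjoint a := .of_le_one h.2
  have hp : 0 ≤ 1 + a := by simpa [neg_le_iff_add_nonneg'] using h.1
  have hm : 0 ≤ 1 - a := sub_nonneg.2 h.2
  have hdecomp : (1 - a) * (1 + a) * (1 - a) + (1 + a) * (1 - a) * (1 + a) =
      (2 : ℝ) • (1 - a * a) := by
    rw [two_smul]; noncomm_ring
  rw [← sub_nonneg, ← inv_smul_smul₀ (two_ne_zero' ℝ) (1 - a * a), ← hdecomp]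
  exact smul_nonneg (by norm_num) <| add_nonneg
    (((IsSelfAdjoint.one R).sub ha).conjugate_nonneg hp)
    (((IsSelfAdjoint.one R).add ha).conjugate_nonneg hm)

end StarOrderedRing

section SumOfSquares

variable {R : Type*} [Ring R] [Algebra ℝ R]

-- Mathlib's `tsirelson_inequality` assumes involutions `x² = 1`; for contractions the terms
-- `1 - x²` must be kept in the decomposition.
theorem two_mul_sqrt_two_smul_one_sub_chshOperator {a b : Fin 2 → R}
    (hab : ∀ i j, Commute (a i) (b j)) :
    (2 * √2) • (1 : R) - chshOperator a b =
      (√2)⁻¹ • ((a 0 - (√2)⁻¹ • (b 0 + b 1)) * (a 0 - (√2)⁻¹ • (b 0 + b 1))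
        + (a 1 - (√2)⁻¹ • (b 1 - b 0)) * (a 1 - (√2)⁻¹ • (b 1 - b 0))
        + (1 - a 0 * a 0) + (1 - a 1 * a 1) + (1 - b 0 * b 0) + (1 - b 1 * b 1)) := by
  simp only [chshOperator, mul_add, add_mul, mul_sub, sub_mul, smul_add, smul_sub,
    smul_mul_assoc, mul_smul_comm, smul_smul, (hab _ _).eq]
  match_scalars <;> field_simp <;> norm_num

variable [PartialOrder R] [StarRing R] [StarOrderedRing R] [StarModule ℝ R]

theorem chshOperator_le {a b : Fin 2 → R}
    (ha : ∀ i, IsSelfAdjoint (a i)) (hb : ∀ j, IsSelfAdjoint (b j))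
    (ha₁ : ∀ i, a i * a i ≤ 1) (hb₁ : ∀ j, b j * b j ≤ 1)
    (hab : ∀ i j, Commute (a i) (b j)) :
    chshOperator a b ≤ (2 * √2) • (1 : R) := by
  have hc : IsSelfAdjoint (√2)⁻¹ := .all _
  rw [← sub_nonneg, two_mul_sqrt_two_smul_one_sub_chshOperator hab]
  refine smul_nonneg (by positivity) ?_
  refine add_nonneg (add_nonneg (add_nonneg (add_nonneg (add_nonneg ?_ ?_) ?_) ?_) ?_) ?_
  · exact ((ha 0).sub (hc.smul ((hb 0).add (hb 1)))).mul_self_nonneg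
  · exact ((ha 1).sub (hc.smul ((hb 1).sub (hb 0)))).mul_self_nonneg
  · exact sub_nonneg.2 (ha₁ 0)
  · exact sub_nonneg.2 (ha₁ 1)
  · exact sub_nonneg.2 (hb₁ 0)
  · exact sub_nonneg.2 (hb₁ 1)

theorem chshOperator_mem_Icc {a b : Fin 2 → R}
    (ha : ∀ i, a i ∈ Set.Icc (-1) 1) (hb : ∀ j, b j ∈ Set.Icc (-1) 1)
    (hab : ∀ i j, Commute (a i) (b j)) :
    chshOperator a b ∈ Set.Icc (-((2 * √2) • 1)) ((2 * √2) • 1) := by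
  have ha' i : IsSelfAdjoint (a i) := .of_le_one (ha i).2
  have hb' j : IsSelfAdjoint (b j) := .of_le_one (hb j).2
  have ha₁ i : a i * a i ≤ 1 := mul_self_le_one_of_mem_Icc (ha i)
  have hb₁ j : b j * b j ≤ 1 := mul_self_le_one_of_mem_Icc (hb j)
  refine ⟨?_, chshOperator_le ha' hb' ha₁ hb₁ hab⟩
  rw [neg_le, ← chshOperator_neg_left]
  exact chshOperator_le (fun i => (ha' i).neg) hb' (fun i => by simpa using ha₁ i) hb₁
    (fun i j => (hab i j).neg_left)

end SumOfSquares

theorem Complex.norm_le_of_mem_Icc {z : ℂ} {r : ℝ} (h : z ∈ Set.Icc (-(r : ℂ)) r) : ‖z‖ ≤ r := by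
  rw [Complex.eq_re_of_ofReal_le (by simpa using h.1 : ((-r : ℝ) : ℂ) ≤ z), Complex.norm_real,
    Real.norm_eq_abs, abs_le]
  exact ⟨by simpa using (Complex.le_def.1 h.1).1, (Complex.le_def.1 h.2).1⟩

namespace Matrix

theorem sub_kronecker {α l m n p : Type*} [Ring α] (A₁ A₂ : Matrix l m α) (B : Matrix n p α) :
    (A₁ - A₂) ⊗ₖ B = A₁ ⊗ₖ B - A₂ ⊗ₖ B := by
  ext; simp [sub_mul]

theorem neg_kronecker {α l m n p : Type*} [Ring α] (A : Matrix l m α) (B : Matrix n p α) :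
    (-A) ⊗ₖ B = -(A ⊗ₖ B) := by
  ext; simp

theorem kronecker_sub {α l m n p : Type*} [Ring α] (A : Matrix l m α) (B₁ B₂ : Matrix n p α) :
    A ⊗ₖ (B₁ - B₂) = A ⊗ₖ B₁ - A ⊗ₖ B₂ := by
  ext; simp [mul_sub]

theorem kronecker_neg {α l m n p : Type*} [Ring α] (A : Matrix l m α) (B : Matrix n p α) :
    A ⊗ₖ (-B) = -(A ⊗ₖ B) := by
  ext; simp

variable {𝕜 : Type*} [RCLike 𝕜] {m n : Type*} [Fintype m] [Fintype n]

open scoped MatrixOrder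

theorem kronecker_le_kronecker_of_nonneg_right {X Y : Matrix m m 𝕜} {C : Matrix n n 𝕜}
    (h : X ≤ Y) (hC : 0 ≤ C) : X ⊗ₖ C ≤ Y ⊗ₖ C := by
  rw [le_iff, ← sub_kronecker]
  exact (le_iff.1 h).kronecker hC.posSemidef

theorem kronecker_le_kronecker_of_nonneg_left {X Y : Matrix n n 𝕜} {C : Matrix m m 𝕜}
    (h : X ≤ Y) (hC : 0 ≤ C) : C ⊗ₖ X ≤ C ⊗ₖ Y := by
  rw [le_iff, ← kronecker_sub]
  exact hC.posSemidef.kronecker (le_iff.1 h)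

variable [DecidableEq n]

theorem PosSemidef.trace_mul_nonneg {ρ X : Matrix n n 𝕜} (hρ : ρ.PosSemidef) (hX : X.PosSemidef) :
    0 ≤ (ρ * X).trace := by
  obtain ⟨b, rfl⟩ := CStarAlgebra.nonneg_iff_eq_star_mul_self.mp hρ.nonneg
  rw [star_eq_conjTranspose, Matrix.mul_assoc, trace_mul_comm]
  exact (hX.mul_mul_conjTranspose_same b).trace_nonneg

theorem norm_trace_mul_le_of_mem_Icc {ρ S : Matrix n n ℂ} (hρ : ρ.PosSemidef) (hρ1 : ρ.trace = 1)
    {r : ℝ} (hS : S ∈ Set.Icc (-(r • 1)) (r • 1)) : ‖(ρ * S).trace‖ ≤ r := by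
  have hu := hρ.trace_mul_nonneg (le_iff.1 hS.2)
  have hl := hρ.trace_mul_nonneg (le_iff.1 hS.1)
  rw [mul_sub, trace_sub, mul_smul_comm, mul_one, trace_smul, hρ1, sub_nonneg] at hu
  rw [mul_sub, trace_sub, mul_neg, mul_smul_comm, mul_one, trace_neg, trace_smul, hρ1, sub_nonneg] at hl
  exact Complex.norm_le_of_mem_Icc ⟨by simpa using hl, by simpa using hu⟩

variable [DecidableEq m]

theorem kronecker_one_mem_Icc {A : Matrix m m 𝕜} (hA : A ∈ Set.Icc (-1) 1) :
    A ⊗ₖ (1 : Matrix n n 𝕜) ∈ Set.Icc (-1) 1 := by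
  have h₁ := kronecker_le_kronecker_of_nonneg_right hA.1 (zero_le_one' (Matrix n n 𝕜))
  have h₂ := kronecker_le_kronecker_of_nonneg_right hA.2 (zero_le_one' (Matrix n n 𝕜))
  rw [neg_kronecker, one_kronecker_one] at h₁
  rw [one_kronecker_one] at h₂
  exact ⟨h₁, h₂⟩

theorem one_kronecker_mem_Icc {B : Matrix n n 𝕜} (hB : B ∈ Set.Icc (-1) 1) :
    (1 : Matrix m m 𝕜) ⊗ₖ B ∈ Set.Icc (-1) 1 := by
  have h₁ := kronecker_le_kronecker_of_nonneg_left hB.1 (zero_le_one' (Matrix m m 𝕜))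
  have h₂ := kronecker_le_kronecker_of_nonneg_left hB.2 (zero_le_one' (Matrix m m 𝕜))
  rw [kronecker_neg, one_kronecker_one] at h₁
  rw [one_kronecker_one] at h₂
  exact ⟨h₁, h₂⟩

theorem kronecker_one_mul_one_kronecker (A : Matrix m m 𝕜) (B : Matrix n n 𝕜) :
    (A ⊗ₖ 1) * (1 ⊗ₖ B) = A ⊗ₖ B := by
  rw [← mul_kronecker_mul, Matrix.mul_one, Matrix.one_mul]

theorem commute_kronecker_one_one_kronecker (A : Matrix m m 𝕜) (B : Matrix n n 𝕜) :
    Commute (A ⊗ₖ 1) (1 ⊗ₖ B) := by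
  rw [Commute, SemiconjBy, kronecker_one_mul_one_kronecker, ← mul_kronecker_mul,
    Matrix.mul_one, Matrix.one_mul]

theorem chshOperator_kronecker (A : Fin 2 → Matrix m m 𝕜) (B : Fin 2 → Matrix n n 𝕜) :
    chshOperator (fun i => A i ⊗ₖ (1 : Matrix n n 𝕜)) (fun j => (1 : Matrix m m 𝕜) ⊗ₖ B j) =
      A 0 ⊗ₖ B 0 + A 0 ⊗ₖ B 1 - A 1 ⊗ₖ B 0 + A 1 ⊗ₖ B 1 := by
  simp only [chshOperator, kronecker_one_mul_one_kronecker]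

end Matrix

theorem tsirelson_bound_general (m n : ℕ)
    (ρ : Matrix (Fin m × Fin n) (Fin m × Fin n) ℂ)
    (hρ : ρ.PosSemidef) (hρ1 : ρ.trace = 1)
    (A : Fin 2 → Matrix (Fin m) (Fin m) ℂ)
    (hAub : ∀ i, ((1 : Matrix (Fin m) (Fin m) ℂ) - A i).PosSemidef)
    (hAlb : ∀ i, ((1 : Matrix (Fin m) (Fin m) ℂ) + A i).PosSemidef)
    (B : Fin 2 → Matrix (Fin n) (Fin n) ℂ)
    (hBub : ∀ j, ((1 : Matrix (Fin n) (Fin n) ℂ) - B j).PosSemidef)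
    (hBlb : ∀ j, ((1 : Matrix (Fin n) (Fin n) ℂ) + B j).PosSemidef) :
    ‖(ρ * (A 0 ⊗ₖ B 0 + A 0 ⊗ₖ B 1 - A 1 ⊗ₖ B 0 + A 1 ⊗ₖ B 1)).trace‖
      ≤ 2 * Real.sqrt 2 := by
  open scoped MatrixOrder in
  have hA i : A i ∈ Set.Icc (-1) 1 := ⟨by simpa [le_iff, add_comm] using hAlb i, hAub i⟩
  have hB j : B j ∈ Set.Icc (-1) 1 := ⟨by simpa [le_iff, add_comm] using hBlb j, hBub j⟩
  rw [← chshOperator_kronecker]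
  exact norm_trace_mul_le_of_mem_Icc hρ hρ1 <| chshOperator_mem_Icc
    (fun i => kronecker_one_mem_Icc (hA i)) (fun j => one_kronecker_mem_Icc (hB j))
    (fun i j => commute_kronecker_one_one_kronecker (A i) (B j))

theorem tsirelson_bound (m n : ℕ)
    (ρ : Matrix (Fin m × Fin n) (Fin m × Fin n) ℂ)
    (hρ : ρ.PosSemidef) (hρ1 : ρ.trace = 1)
    (A : Fin 2 → Matrix (Fin m) (Fin m) ℂ)
    (hAH : ∀ i, (A i).IsHermitian)
    (hAub : ∀ i, ((1 : Matrix (Fin m) (Fin m) ℂ) - A i).PosSemidef)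
    (hAlb : ∀ i, ((1 : Matrix (Fin m) (Fin m) ℂ) + A i).PosSemidef)
    (B : Fin 2 → Matrix (Fin n) (Fin n) ℂ)
    (hBH : ∀ j, (B j).IsHermitian)
    (hBub : ∀ j, ((1 : Matrix (Fin n) (Fin n) ℂ) - B j).PosSemidef)
    (hBlb : ∀ j, ((1 : Matrix (Fin n) (Fin n) ℂ) + B j).PosSemidef) :
    ‖(ρ * (A 0 ⊗ₖ B 0 + A 0 ⊗ₖ B 1 - A 1 ⊗ₖ B 0 + A 1 ⊗ₖ B 1)).trace‖
      ≤ 2 * Real.sqrt 2 :=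
  tsirelson_bound_general m n ρ hρ hρ1 A hAub hAlb B hBub hBlb
end
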